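/- arXiv:1004.4512 — 8 statements merged into one kernel-verified Lean document; each statement's English description precedes it below -/
import Mathlib

section
/- The Fuss-Catalan number (1/(n+1))·binom((n+1)(m+1), n) is a positive integer for all positive integers n and m; i.e., (n+1) divides binom((n+1)(m+1), n). -/
/-- `a` divides `k * choose N k = N * choose (N - 1) (k - 1)` and is coprime to `k`. -/
theorem Nat.Coprime.dvd_choose_of_dvd {a N k : ℕ} (hak : Nat.Coprime a k) (haN : a ∣ N) :
    a ∣ N.choose k := by
  rcases k with _ | k
  · simpa using hak
  rcases N with _ | N
  · simp
  have h : a ∣ (N + 1).choose (k + 1) * (k + 1) :=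
    Nat.add_one_mul_choose_eq N k ▸ haN.mul_right _
  exact hak.dvd_of_dvd_mul_right h

theorem fussCatalan_pos_integer_general (n m : ℕ) :
    (n + 1) ∣ Nat.choose ((n + 1) * (m + 1)) n ∧
      0 < Nat.choose ((n + 1) * (m + 1)) n / (n + 1) := by
  have hdvd : (n + 1) ∣ Nat.choose ((n + 1) * (m + 1)) n :=
    Nat.Coprime.dvd_choose_of_dvd (by simp) (dvd_mul_right _ _)
  have hpos : 0 < Nat.choose ((n + 1) * (m + 1)) n :=
    Nat.choose_pos (Nat.le_succ n |>.trans (Nat.le_mul_of_pos_right _ m.succ_pos))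
  exact ⟨hdvd, Nat.div_pos (Nat.le_of_dvd hpos hdvd) n.succ_pos⟩

/-- The Fuss-Catalan number `(1/(n+1)) * binom((n+1)(m+1), n)` is a positive integer:
`n+1` divides the binomial coefficient, and the quotient is positive. -/
theorem fussCatalan_pos_integer (n m : ℕ) (hn : 0 < n) (hm : 0 < m) :
    (n + 1) ∣ Nat.choose ((n + 1) * (m + 1)) n ∧
      0 < Nat.choose ((n + 1) * (m + 1)) n / (n + 1) :=
  fussCatalan_pos_integer_general n m
end

section
/- Every (m+2)-angulation of an (nm+2)-gon consists of exactly n-1 m-diagonals. -/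
/-- A chord of the `(nm+2)`-gon (vertices labeled `1,…,nm+2` clockwise) is recorded as a
pair `(i, j)` with `i < j`. It is an *m-diagonal* if it joins two non-adjacent boundary
vertices and divides the polygon into two parts whose numbers of sides
(`j - i + 1` and `(nm+2) - (j - i) + 1`) are both congruent to `2` modulo `m`. -/
def IsMDiagonal (n m : ℕ) (c : ℕ × ℕ) : Prop :=
  1 ≤ c.1 ∧ c.1 < c.2 ∧ c.2 ≤ n * m + 2 ∧
    2 ≤ c.2 - c.1 ∧ c.2 - c.1 ≤ n * m ∧
    (c.2 - c.1 + 1) % m = 2 % m ∧ ((n * m + 2) - (c.2 - c.1) + 1) % m = 2 % m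

/-- Two chords cross in the interior of the polygon. -/
def Crosses (a b : ℕ × ℕ) : Prop :=
  (a.1 < b.1 ∧ b.1 < a.2 ∧ a.2 < b.2) ∨ (b.1 < a.1 ∧ a.1 < b.2 ∧ b.2 < a.2)

/-- An `(m+2)`-angulation of the `(nm+2)`-gon: a maximal set of pairwise non-crossing
m-diagonals. -/
def IsAngulation (n m : ℕ) (Δ : Finset (ℕ × ℕ)) : Prop :=
  (∀ c ∈ Δ, IsMDiagonal n m c) ∧
    (∀ a ∈ Δ, ∀ b ∈ Δ, ¬ Crosses a b) ∧
    (∀ c, IsMDiagonal n m c → c ∉ Δ → ∃ d ∈ Δ, Crosses c d)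


/-!
The shortest diagonal of an angulation of the `((n+1)m+2)`-gon is an ear `(i, i+m+1)`: a longer
one would leave room for the ear below it, and whatever diagonal blocks that ear would lie inside
it and be shorter still. No other diagonal ends strictly inside the ear, so deleting its `m`
interior vertices and relabelling is order preserving on all endpoints; it maps the remaining
diagonals bijectively onto an angulation of the `(nm+2)`-gon, and the count drops by one.
-/

lemma isMDiagonal_iff {n m a b : ℕ} (hm : 0 < m) :
    IsMDiagonal n m (a, b) ↔
      1 ≤ a ∧ b ≤ n * m + 2 ∧ ∃ k, 0 < k ∧ k < n ∧ b = a + k * m + 1 := by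
  constructor
  · rintro ⟨ha, -, hb, hspan, hspan', hmod, -⟩
    obtain ⟨k, hk⟩ : m ∣ b - a + 1 - 2 := (Nat.modEq_iff_dvd' (by omega)).mp hmod.symm
    rw [mul_comm] at hk
    have hk0 : 0 < k := Nat.pos_of_ne_zero fun h => by simp [h] at hk; omega
    exact ⟨ha, hb, k, hk0, Nat.lt_of_mul_lt_mul_right (a := m) (by omega), by omega⟩
  · rintro ⟨ha, hb, k, hk0, hkn, rfl⟩
    have hm_le : m ≤ k * m := Nat.le_mul_of_pos_left m hk0
    have hcompl : (n - k) * m + k * m = n * m := by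
      rw [← Nat.add_mul, Nat.sub_add_cancel hkn.le]
    have hcompl_pos : m ≤ (n - k) * m := Nat.le_mul_of_pos_left m (by omega)
    refine ⟨ha, by omega, hb, by omega, by omega, ?_, ?_⟩
    · rw [show a + k * m + 1 - a + 1 = 2 + k * m by omega, Nat.add_mul_mod_self_right]
    · rw [show n * m + 2 - (a + k * m + 1 - a) + 1 = 2 + (n - k) * m by omega,
        Nat.add_mul_mod_self_right]

lemma StrictMonoOn.crosses_map_iff {f : ℕ → ℕ} {s : Set ℕ} (hf : StrictMonoOn f s)
    {c d : ℕ × ℕ} (hc : c ∈ s ×ˢ s) (hd : d ∈ s ×ˢ s) :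
    Crosses (Prod.map f f c) (Prod.map f f d) ↔ Crosses c d := by
  obtain ⟨hc₁, hc₂⟩ := hc
  obtain ⟨hd₁, hd₂⟩ := hd
  simp only [Crosses, Prod.map_fst, Prod.map_snd, hf.lt_iff_lt hc₁ hd₁, hf.lt_iff_lt hd₁ hc₂,
    hf.lt_iff_lt hc₂ hd₂, hf.lt_iff_lt hd₁ hc₁, hf.lt_iff_lt hc₁ hd₂, hf.lt_iff_lt hd₂ hc₂]

lemma not_crosses_ear {i m : ℕ} {c : ℕ × ℕ}
    (hc : c ∈ (Set.Ioo i (i + m + 1))ᶜ ×ˢ (Set.Ioo i (i + m + 1))ᶜ) :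
    ¬ Crosses c (i, i + m + 1) := by
  simp only [Set.mem_prod, Set.mem_compl_iff, Set.mem_Ioo] at hc
  unfold Crosses
  omega

/-- Deletes the vertices `i+1, …, i+m` and relabels the later ones. -/
def contractVertex (i m p : ℕ) : ℕ := if p ≤ i then p else p - m

def expandVertex (i m p : ℕ) : ℕ := if p ≤ i then p else p + m

lemma strictMonoOn_contractVertex (i m : ℕ) :
    StrictMonoOn (contractVertex i m) (Set.Ioo i (i + m + 1))ᶜ := by
  intro p hp q hq hpq
  simp only [Set.mem_compl_iff, Set.mem_Ioo] at hp hq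
  unfold contractVertex
  split_ifs <;> omega

lemma expandVertex_notMem_Ioo (i m p : ℕ) : expandVertex i m p ∉ Set.Ioo i (i + m + 1) := by
  unfold expandVertex
  split_ifs <;> simp only [Set.mem_Ioo] <;> omega

lemma contractVertex_expandVertex (i m p : ℕ) : contractVertex i m (expandVertex i m p) = p := by
  unfold contractVertex expandVertex
  split_ifs <;> omega

lemma isMDiagonal_expandVertex {n m i a b : ℕ} (hm : 0 < m) (hd : IsMDiagonal n m (a, b)) :
    IsMDiagonal (n + 1) m (expandVertex i m a, expandVertex i m b) := by
  obtain ⟨ha, hb, k, hk0, hkn, rfl⟩ := (isMDiagonal_iff hm).1 hd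
  have hsucc : (n + 1) * m = n * m + m := by ring
  rw [isMDiagonal_iff hm]
  unfold expandVertex
  split_ifs
  · exact ⟨ha, by omega, k, hk0, by omega, rfl⟩
  · exact ⟨ha, by omega, k + 1, by omega, by omega, by rw [Nat.succ_mul]; omega⟩
  · omega
  · exact ⟨by omega, by omega, k, hk0, by omega, by omega⟩

lemma isMDiagonal_contractVertex {n m i a b : ℕ} (hm : 0 < m)
    (hear : IsMDiagonal (n + 1) m (i, i + m + 1)) (hd : IsMDiagonal (n + 1) m (a, b))
    (hab : (a, b) ∈ (Set.Ioo i (i + m + 1))ᶜ ×ˢ (Set.Ioo i (i + m + 1))ᶜ)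
    (hne : (a, b) ≠ (i, i + m + 1)) :
    IsMDiagonal n m (contractVertex i m a, contractVertex i m b) := by
  obtain ⟨hi, hi', -⟩ := (isMDiagonal_iff hm).1 hear
  obtain ⟨ha, hb, k, hk0, hkn, rfl⟩ := (isMDiagonal_iff hm).1 hd
  simp only [Set.mem_prod, Set.mem_compl_iff, Set.mem_Ioo] at hab
  have hsucc : (n + 1) * m = n * m + m := by ring
  have hm_le : m ≤ k * m := Nat.le_mul_of_pos_left m hk0
  have hk_lt (h : k * m < n * m) : k < n := Nat.lt_of_mul_lt_mul_right h
  rw [isMDiagonal_iff hm]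
  unfold contractVertex
  split_ifs
  · exact ⟨ha, by omega, k, hk0, hk_lt (by omega), rfl⟩
  · -- a diagonal straddling the ear is longer than it, so it loses exactly `m` of its span
    have hk1 : k ≠ 1 := fun h => hne (by subst h; ext <;> simp only <;> omega)
    refine ⟨ha, by omega, k - 1, by omega, by omega, ?_⟩
    rw [Nat.sub_one_mul]
    omega
  · omega
  · exact ⟨by omega, by omega, k, hk0, hk_lt (by omega), by omega⟩

def earContraction (i m : ℕ) (Δ : Finset (ℕ × ℕ)) : Finset (ℕ × ℕ) :=
  (Δ.erase (i, i + m + 1)).image (Prod.map (contractVertex i m) (contractVertex i m))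

namespace IsAngulation

variable {n m : ℕ} {Δ : Finset (ℕ × ℕ)}

lemma eq_empty_of_le_one (hm : 0 < m) (hn : n ≤ 1) (hΔ : IsAngulation n m Δ) : Δ = ∅ :=
  Finset.eq_empty_of_forall_notMem fun ⟨_, _⟩ hc => by
    obtain ⟨-, -, k, hk0, hkn, -⟩ := (isMDiagonal_iff hm).1 (hΔ.1 _ hc)
    omega

lemma exists_ear (hm : 0 < m) (hn : 0 < n) (hΔ : IsAngulation (n + 1) m Δ) :
    ∃ i, (i, i + m + 1) ∈ Δ := by
  have hdiag (a : ℕ) (ha : 1 ≤ a) (hb : a + m + 1 ≤ (n + 1) * m + 2) :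
      IsMDiagonal (n + 1) m (a, a + m + 1) :=
    (isMDiagonal_iff hm).2 ⟨ha, hb, 1, one_pos, by omega, by rw [one_mul]⟩
  have hne : Δ.Nonempty := by
    by_cases h : (1, 1 + m + 1) ∈ Δ
    · exact ⟨_, h⟩
    · obtain ⟨d, hd, -⟩ := hΔ.2.2 _ (hdiag 1 le_rfl (by nlinarith)) h
      exact ⟨d, hd⟩
  obtain ⟨⟨a, b⟩, hab, hmin⟩ := Δ.exists_min_image (fun c => c.2 - c.1) hne
  obtain ⟨ha, hb, k, hk0, -, rfl⟩ := (isMDiagonal_iff hm).1 (hΔ.1 _ hab)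
  refine ⟨a, ?_⟩
  obtain rfl | hk1 := eq_or_ne k 1
  · simpa using hab
  have hlong : 2 * m ≤ k * m := Nat.mul_le_mul_right m (by omega)
  have hshort : (a, a + m + 1) ∉ Δ := fun h => by have := hmin _ h; simp only at this; omega
  obtain ⟨⟨c, d⟩, hcd, hcross⟩ := hΔ.2.2 _ (hdiag a ha (by omega)) hshort
  have hcd_lt : c < d := (hΔ.1 _ hcd).2.1
  have hnot := hΔ.2.1 _ hab _ hcd
  have := hmin _ hcd
  simp only [Crosses] at hcross hnot this
  omega

variable {i : ℕ}

lemma mem_compl_Ioo_ear (hm : 0 < m) (hΔ : IsAngulation n m Δ) (hear : (i, i + m + 1) ∈ Δ)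
    {c : ℕ × ℕ} (hc : c ∈ Δ) :
    c ∈ (Set.Ioo i (i + m + 1))ᶜ ×ˢ (Set.Ioo i (i + m + 1))ᶜ := by
  obtain ⟨a, b⟩ := c
  obtain ⟨-, -, k, hk0, -, rfl⟩ := (isMDiagonal_iff hm).1 (hΔ.1 _ hc)
  have hm_le : m ≤ k * m := Nat.le_mul_of_pos_left m hk0
  have h₁ := hΔ.2.1 _ hear _ hc
  have h₂ := hΔ.2.1 _ hc _ hear
  simp only [Crosses] at h₁ h₂
  simp only [Set.mem_prod, Set.mem_compl_iff, Set.mem_Ioo]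
  omega

lemma card_earContraction (hm : 0 < m) (hΔ : IsAngulation n m Δ)
    (hear : (i, i + m + 1) ∈ Δ) : (earContraction i m Δ).card = Δ.card - 1 := by
  rw [earContraction, Finset.card_image_of_injOn, Finset.card_erase_of_mem hear]
  have hinj := (strictMonoOn_contractVertex i m).injOn
  exact (hinj.prodMap hinj).mono fun c hc =>
    hΔ.mem_compl_Ioo_ear hm hear (Finset.mem_of_mem_erase hc)

lemma earContraction_isAngulation (hm : 0 < m) (hΔ : IsAngulation (n + 1) m Δ)
    (hear : (i, i + m + 1) ∈ Δ) : IsAngulation n m (earContraction i m Δ) := by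
  have hout {c} (hc : c ∈ Δ) := hΔ.mem_compl_Ioo_ear hm hear hc
  have hmono := strictMonoOn_contractVertex i m
  simp only [IsAngulation, earContraction, Finset.mem_image, Finset.mem_erase]
  refine ⟨?_, ?_, ?_⟩
  · rintro _ ⟨⟨a, b⟩, ⟨hne, hab⟩, rfl⟩
    exact isMDiagonal_contractVertex hm (hΔ.1 _ hear) (hΔ.1 _ hab) (hout hab) hne
  · rintro _ ⟨c, ⟨-, hc⟩, rfl⟩ _ ⟨d, ⟨-, hd⟩, rfl⟩
    rw [hmono.crosses_map_iff (hout hc) (hout hd)]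
    exact hΔ.2.1 _ hc _ hd
  · rintro ⟨a, b⟩ hab hnotMem
    set c := (expandVertex i m a, expandVertex i m b)
    have hc_out : c ∈ (Set.Ioo i (i + m + 1))ᶜ ×ˢ (Set.Ioo i (i + m + 1))ᶜ :=
      ⟨expandVertex_notMem_Ioo i m a, expandVertex_notMem_Ioo i m b⟩
    have hc_map : Prod.map (contractVertex i m) (contractVertex i m) c = (a, b) := by
      simp only [c, Prod.map, contractVertex_expandVertex]
    have hc_ne : c ≠ (i, i + m + 1) := fun h => by
      have hspan := hab.2.2.2.1
      rw [← hc_map, h] at hspan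
      simp only [Prod.map, contractVertex] at hspan
      split_ifs at hspan <;> omega
    have hc : c ∉ Δ := fun h => hnotMem ⟨c, ⟨hc_ne, h⟩, hc_map⟩
    obtain ⟨d, hd, hcross⟩ := hΔ.2.2 c (isMDiagonal_expandVertex hm hab) hc
    have hd_ne : d ≠ (i, i + m + 1) := by rintro rfl; exact not_crosses_ear hc_out hcross
    refine ⟨_, ⟨d, ⟨hd_ne, hd⟩, rfl⟩, ?_⟩
    rwa [← hc_map, hmono.crosses_map_iff hc_out (hout hd)]

end IsAngulation

theorem angulation_card_general (n m : ℕ) (hm : 1 ≤ m)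
    (Δ : Finset (ℕ × ℕ)) (hΔ : IsAngulation n m Δ) : Δ.card = n - 1 := by
  induction n generalizing Δ with
  | zero => simp [hΔ.eq_empty_of_le_one hm zero_le_one]
  | succ n ih =>
    obtain rfl | hn := Nat.eq_zero_or_pos n
    · simp [hΔ.eq_empty_of_le_one hm le_rfl]
    obtain ⟨i, hear⟩ := hΔ.exists_ear hm hn
    have := ih _ (hΔ.earContraction_isAngulation hm hear)
    rw [hΔ.card_earContraction hm hear] at this
    have : 0 < Δ.card := Finset.card_pos.mpr ⟨_, hear⟩
    omega

/-- Every `(m+2)`-angulation of an `(nm+2)`-gon consists of exactly `n-1` m-diagonals. -/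
theorem angulation_card (n m : ℕ) (hn : 2 ≤ n) (hm : 1 ≤ m)
    (Δ : Finset (ℕ × ℕ)) (hΔ : IsAngulation n m Δ) : Δ.card = n - 1 :=
  angulation_card_general n m hm Δ hΔ
end

section
/- The formal power series U(x) = Σ_{r≥1} (1/r)·binom(r(s-1), r-1)·x^r satisfies the functional equation U(x) = x·(1 + U(x))^{s-1}. -/
open PowerSeries

/-!
Write `m = s - 1` and `W_k = Σ_n k/(mn+k)·binom(mn+k, n)·x^n` (Raney numbers). Pascal's rule gives
`W_{k+1} = W_k + x·W_{k+m}`, and a recurrence of this shape determines a family of series from its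
first member. Since `k ↦ W_k·W_l` and `k ↦ W_{k+l}` both satisfy it and agree at `k = 0`, we get
`W_k = W_1^k`. Coefficientwise `U = x·W_m`, so the recurrence at `k = 0` reads `W_1 = 1 + U`, and
`U = x·W_1^m = x·(1 + U)^m`.
-/

namespace PowerSeries

theorem eq_of_succ_eq_add_X_mul {R : Type*} [Semiring R] {m : ℕ} {F G : ℕ → R⟦X⟧}
    (hF : ∀ k, F (k + 1) = F k + X * F (k + m)) (hG : ∀ k, G (k + 1) = G k + X * G (k + m))
    (h0 : F 0 = G 0) : F = G := by
  funext k
  ext n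
  induction n generalizing k with
  | zero =>
    induction k with
    | zero => rw [h0]
    | succ k ih => simp only [hF, hG, map_add, coeff_zero_X_mul, ih]
  | succ n ihn =>
    induction k with
    | zero => rw [h0]
    | succ k ihk => rw [hF, hG, map_add, map_add, coeff_succ_X_mul, coeff_succ_X_mul, ihk, ihn]

end PowerSeries

/-- The value at `n = 0` is set to `1`: for `k = 0` the formula would give `0 / 0 = 0`. -/
def raney (m n k : ℕ) : ℚ :=
  if n = 0 then 1 else k / (m * n + k : ℕ) * (m * n + k).choose n

theorem raney_of_ne_zero {k : ℕ} (hk : k ≠ 0) (m n : ℕ) :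
    raney m n k = k / (m * n + k : ℕ) * (m * n + k).choose n := by
  rcases n with _ | n
  · simp [raney, hk]
  · exact if_neg n.succ_ne_zero

theorem raney_succ_succ {m : ℕ} (hm : 0 < m) (n k : ℕ) :
    raney m (n + 1) (k + 1) = raney m (n + 1) k + raney m n (k + m) := by
  rw [raney, if_neg n.succ_ne_zero, raney, if_neg n.succ_ne_zero, raney_of_ne_zero (by omega),
    show m * n + (k + m) = m * (n + 1) + k by ring,
    show m * (n + 1) + (k + 1) = m * (n + 1) + k + 1 by ring]
  have hA : ((m * (n + 1) + k : ℕ) : ℚ) = m * (n + 1) + k := by push_cast; ring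
  have hA0 : ((m * (n + 1) + k : ℕ) : ℚ) ≠ 0 := by positivity
  generalize m * (n + 1) + k = A at hA hA0 ⊢
  have hratio : ((A : ℚ) + 1) * A.choose n = (A.choose n + A.choose (n + 1)) * (n + 1) := by
    exact_mod_cast Nat.choose_succ_succ A n ▸ Nat.add_one_mul_choose_eq A n
  rw [Nat.choose_succ_succ]
  push_cast
  field_simp
  linear_combination (-m : ℚ) * hratio + (A.choose n + A.choose (n + 1) : ℚ) * hA

def raneySeries (m k : ℕ) : ℚ⟦X⟧ :=
  mk fun n => raney m n k

theorem raneySeries_zero (m : ℕ) : raneySeries m 0 = 1 := by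
  ext n
  rcases n with _ | n <;> simp [raneySeries, raney, coeff_one]

theorem raneySeries_succ {m : ℕ} (hm : 0 < m) (k : ℕ) :
    raneySeries m (k + 1) = raneySeries m k + X * raneySeries m (k + m) := by
  ext n
  rcases n with _ | n
  · simp [raneySeries, raney]
  · simp only [raneySeries, map_add, coeff_succ_X_mul, coeff_mk, raney_succ_succ hm]

theorem raneySeries_add {m : ℕ} (hm : 0 < m) (k l : ℕ) :
    raneySeries m (k + l) = raneySeries m k * raneySeries m l := by
  have key : (fun k => raneySeries m (k + l)) = fun k => raneySeries m k * raneySeries m l := by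
    refine eq_of_succ_eq_add_X_mul (m := m) (fun k => ?_) (fun k => ?_) ?_
    · rw [add_right_comm, raneySeries_succ hm, add_right_comm]
    · rw [raneySeries_succ hm]; ring
    · rw [zero_add, raneySeries_zero, one_mul]
  exact congrFun key k

theorem raneySeries_eq_pow {m : ℕ} (hm : 0 < m) (k : ℕ) :
    raneySeries m k = raneySeries m 1 ^ k := by
  induction k with
  | zero => rw [raneySeries_zero, pow_zero]
  | succ k ih => rw [raneySeries_add hm, ih, pow_succ]

theorem mk_fussCatalan_eq_X_mul_raneySeries {m : ℕ} (hm : 0 < m) :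
    (mk fun r => if r = 0 then 0 else (1 / (r : ℚ)) * ((r * m).choose (r - 1) : ℚ)) =
      X * raneySeries m m := by
  ext r
  rcases r with _ | n
  · simp
  · rw [coeff_succ_X_mul, coeff_mk, if_neg n.succ_ne_zero, raneySeries, coeff_mk,
      raney_of_ne_zero hm.ne', Nat.add_sub_cancel, show m * n + m = (n + 1) * m by ring]
    have : (m : ℚ) ≠ 0 := by positivity
    push_cast
    field_simp

/-- The formal power series `U(x) = Σ_{r≥1} (1/r)·binom(r(s-1), r-1)·x^r` satisfies the
functional equation `U(x) = x·(1 + U(x))^{s-1}`. -/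
theorem fussCatalan_series_functional_eq (s : ℕ) (hs : 3 ≤ s)
    (U : PowerSeries ℚ)
    (hU : U = PowerSeries.mk fun r =>
      if r = 0 then 0 else (1 / (r : ℚ)) * (Nat.choose (r * (s - 1)) (r - 1) : ℚ)) :
    U = PowerSeries.X * (1 + U) ^ (s - 1) := by
  have hm : 0 < s - 1 := by omega
  have hUX : U = X * raneySeries (s - 1) (s - 1) := hU ▸ mk_fussCatalan_eq_X_mul_raneySeries hm
  have h1U : 1 + U = raneySeries (s - 1) 1 := by
    rw [raneySeries_succ hm 0, raneySeries_zero, zero_add, hUX]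
  rw [h1U, ← raneySeries_eq_pow hm]
  exact hUX
end

section
/- For integers s ≥ 3, t ≥ 1 and i ≥ t, the rational number (t/i)·binom(i(s-1), i-t) is a positive integer; i.e., i divides t·binom(i(s-1), i-t). -/
/-! Since `k * C(n, k) = n * C(n - 1, k - 1)`, `n` divides `k * C(n, k)`. With `n = i(s-1)` and
`k = i - t`, the number `i` therefore divides both `i * C(n, k)` and `(i - t) * C(n, k)`, hence
their difference `t * C(n, k)`. -/

theorem Nat.dvd_mul_choose (n k : ℕ) : n ∣ k * n.choose k := by
  rcases n with _ | n
  · rcases k with _ | k <;> simp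
  · rcases k with _ | k
    · simp
    · rw [Nat.mul_comm, ← Nat.add_one_mul_choose_eq]
      exact Nat.dvd_mul_right _ _

theorem Nat.dvd_sub_mul_choose_mul (i m k : ℕ) : i ∣ (i - k) * (i * m).choose k := by
  rw [Nat.sub_mul]
  exact Nat.dvd_sub (Nat.dvd_mul_right _ _)
    ((Nat.dvd_mul_right i m).trans (Nat.dvd_mul_choose _ k))

/-- For integers `s ≥ 3`, `t ≥ 1` and `i ≥ t`, the rational number
`(t/i)·binom(i(s-1), i-t)` is a positive integer: `i` divides `t·binom(i(s-1), i-t)`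
and the quotient is positive. -/
theorem fussCatalan_power_coeff_pos_integer (s t i : ℕ) (hs : 3 ≤ s) (ht : 1 ≤ t)
    (hti : t ≤ i) :
    i ∣ t * Nat.choose (i * (s - 1)) (i - t) ∧
      0 < t * Nat.choose (i * (s - 1)) (i - t) / i := by
  have hdvd : i ∣ t * (i * (s - 1)).choose (i - t) := by
    simpa only [Nat.sub_sub_self hti] using Nat.dvd_sub_mul_choose_mul i (s - 1) (i - t)
  have hk : i - t ≤ i * (s - 1) :=
    (Nat.sub_le i t).trans (Nat.le_mul_of_pos_right i (by omega))
  have hpos : 0 < t * (i * (s - 1)).choose (i - t) := Nat.mul_pos ht (Nat.choose_pos hk)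
  exact ⟨hdvd, Nat.div_pos (Nat.le_of_dvd hpos hdvd) (by omega)⟩
end

section
/- For integers s ≥ 3 and k ≥ 2, the coefficient of x^k in (1/2)·(U(x)² − U(x²)) equals (1/k)·binom((s-1)k, k-2) − (1/k)·binom((s-1)(k/2), (k/2)-1), where the second term is omitted (taken to be 0) if k is odd. -/
/-!
Lagrange inversion for `U = X (1 + U)^e`, in the form `n [X^n] U^t = t * binom(e n, n - t)`
for `t ≤ n`, proved by strong induction on `n`: writing `U^t = X^t (1 + U)^(e t)` and expanding
the binomial, the induction hypothesis reduces the step to the convolution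
`∑ j, binom(a, j) * j * binom(b, m + 1 - j) = a * binom(a + b - 1, m)`, which is Vandermonde's
identity after absorbing the factor `j`. The theorem is the cases `t = 2` and `t = 1`.
-/

open PowerSeries Finset

namespace Nat

theorem sum_range_choose_mul_mul_choose (a b m : ℕ) :
    ∑ j ∈ range (m + 2), a.choose j * (j * b.choose (m + 1 - j)) =
      a * (a + b - 1).choose m := by
  rcases a with _ | a
  · rw [zero_mul]
    refine Finset.sum_eq_zero fun j _ => ?_
    rcases j with _ | j <;> simp
  rw [sum_range_succ', zero_mul, mul_zero, add_zero, show a + 1 + b - 1 = a + b by omega,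
    add_choose_eq, Finset.Nat.sum_antidiagonal_eq_sum_range_succ_mk, Finset.mul_sum]
  refine sum_congr rfl fun j hj => ?_
  have hj : j ≤ m := Nat.lt_succ_iff.mp (mem_range.mp hj)
  rw [show m + 1 - (j + 1) = m - j by omega, ← mul_assoc, mul_comm _ (j + 1), mul_comm (j + 1),
    ← add_one_mul_choose_eq a j, mul_assoc]

theorem mul_choose_sub_one (n k : ℕ) : n * (n - 1).choose k = n.choose (k + 1) * (k + 1) := by
  rcases n with _ | n
  · simp
  exact add_one_mul_choose_eq n k

end Nat

section LagrangeInversion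

variable {R : Type*} [CommRing R] {e : ℕ} {U : R⟦X⟧}

theorem constantCoeff_eq_zero_of_eq_X_mul (hU : U = X * (1 + U) ^ e) : constantCoeff U = 0 := by
  rw [hU]; simp

theorem pow_eq_X_pow_mul_one_add_pow (hU : U = X * (1 + U) ^ e) (t : ℕ) :
    U ^ t = X ^ t * (1 + U) ^ (e * t) := by
  conv_lhs => rw [hU]
  rw [mul_pow, ← pow_mul, mul_comm e]

theorem coeff_pow_of_lt (hU : U = X * (1 + U) ^ e) {n t : ℕ} (h : n < t) :
    coeff n (U ^ t) = 0 := by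
  rw [pow_eq_X_pow_mul_one_add_pow hU, coeff_X_pow_mul', if_neg (by omega)]

theorem coeff_add_pow_eq_coeff_one_add_pow (hU : U = X * (1 + U) ^ e) (t m : ℕ) :
    coeff (t + m) (U ^ t) = coeff m ((1 + U) ^ (e * t)) := by
  rw [pow_eq_X_pow_mul_one_add_pow hU, coeff_X_pow_mul', if_pos (by omega),
    Nat.add_sub_cancel_left]

theorem natCast_mul_coeff_one_add_pow (hU : U = X * (1 + U) ^ e) (a m : ℕ) :
    (m : R) * coeff m ((1 + U) ^ a) =
      ∑ j ∈ range (m + 1), a.choose j * (m * coeff m (U ^ j)) := by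
  have hlarge : ∀ j ≥ m + 1, (a.choose j : R) * (m * coeff m (U ^ j)) = 0 := fun j hj => by
    rw [coeff_pow_of_lt hU hj, mul_zero, mul_zero]
  have hchoose : ∀ j ≥ a + 1, (a.choose j : R) * (m * coeff m (U ^ j)) = 0 := fun j hj => by
    rw [Nat.choose_eq_zero_of_lt hj, Nat.cast_zero, zero_mul]
  calc (m : R) * coeff m ((1 + U) ^ a)
      = ∑ j ∈ range (a + 1), (a.choose j : R) * (m * coeff m (U ^ j)) := by
        rw [add_comm, add_pow, map_sum, mul_sum]
        refine sum_congr rfl fun j _ => ?_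
        rw [one_pow, mul_one, ← map_natCast C, coeff_mul_C]
        ring
    _ = ∑ j ∈ range (m + 1 + a), (a.choose j : R) * (m * coeff m (U ^ j)) :=
        (eventually_constant_sum hchoose (by omega)).symm
    _ = _ := eventually_constant_sum hlarge (by omega)

theorem natCast_mul_coeff_pow_eq_mul_choose [IsDomain R] [CharZero R]
    (hU : U = X * (1 + U) ^ e) {n t : ℕ} (htn : t ≤ n) :
    (n : R) * coeff n (U ^ t) = t * (e * n).choose (n - t) := by
  induction n using Nat.strong_induction_on generalizing t with
  | _ n ih =>
  obtain ⟨m, rfl⟩ := Nat.exists_eq_add_of_le htn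
  rw [coeff_add_pow_eq_coeff_one_add_pow hU, Nat.add_sub_cancel_left]
  rcases m with _ | m
  · simp [constantCoeff_eq_zero_of_eq_X_mul hU]
  rcases t.eq_zero_or_pos with rfl | ht
  · simp
  have hconv : ((m + 1 : ℕ) : R) * coeff (m + 1) ((1 + U) ^ (e * t))
      = ((e * t * (e * t + e * (m + 1) - 1).choose m : ℕ) : R) := by
    rw [natCast_mul_coeff_one_add_pow hU, ← Nat.sum_range_choose_mul_mul_choose, Nat.cast_sum]
    refine sum_congr rfl fun j hj => ?_
    rw [ih (m + 1) (by omega) (Nat.lt_succ_iff.mp (mem_range.mp hj))]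
    norm_cast
  have habsorb := Nat.mul_choose_sub_one (e * t + e * (m + 1)) m
  rw [show e * (t + (m + 1)) = e * t + e * (m + 1) by ring]
  have := congrArg (Nat.cast : ℕ → R) habsorb
  push_cast at hconv this ⊢
  refine mul_left_cancel₀ (Nat.cast_add_one_ne_zero m) ?_
  linear_combination ((t : R) + (m + 1)) * hconv + (t : R) * this

end LagrangeInversion

theorem half_Usq_sub_Uxsq_coeff_general (s k : ℕ) (hk : 2 ≤ k)
    (U : PowerSeries ℚ)
    (hU : U = PowerSeries.X * (1 + U) ^ (s - 1))
    (Usq : PowerSeries ℚ)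
    (hUsq : Usq = PowerSeries.mk fun j =>
      if 2 ∣ j then PowerSeries.coeff (j / 2) U else 0) :
    PowerSeries.coeff k ((1 / 2 : ℚ) • (U ^ 2 - Usq))
      = (1 / (k : ℚ)) * (Nat.choose ((s - 1) * k) (k - 2) : ℚ)
        - (if 2 ∣ k then (1 / (k : ℚ)) * (Nat.choose ((s - 1) * (k / 2)) (k / 2 - 1) : ℚ)
          else 0) := by
  have hsq := natCast_mul_coeff_pow_eq_mul_choose hU hk
  rw [map_smul, map_sub, hUsq, coeff_mk, smul_eq_mul]
  split_ifs with hdvd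
  · obtain ⟨c, rfl⟩ := hdvd
    have hlin := natCast_mul_coeff_pow_eq_mul_choose hU (t := 1) (n := c) (by omega)
    rw [pow_one] at hlin
    have hc0 : (c : ℚ) ≠ 0 := by exact_mod_cast (by omega : c ≠ 0)
    rw [Nat.mul_div_cancel_left c two_pos]
    push_cast at hsq hlin ⊢
    field_simp
    linear_combination hsq / 2 - hlin
  · field_simp
    linear_combination hsq

/-- For `s ≥ 3` and `k ≥ 2`, the coefficient of `x^k` in `(1/2)(U(x)² − U(x²))` equals
`(1/k)·binom((s-1)k, k-2) − (1/k)·binom((s-1)(k/2), k/2−1)`, the second term being omitted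
when `k` is odd. Here `U` is the unique power series with zero constant term satisfying
`U = X(1+U)^{s-1}`, and `U(x²)` is the series whose `x^{2j}`-coefficient is the
`x^j`-coefficient of `U`. -/
theorem half_Usq_sub_Uxsq_coeff (s k : ℕ) (hs : 3 ≤ s) (hk : 2 ≤ k)
    (U : PowerSeries ℚ)
    (hU0 : PowerSeries.constantCoeff U = 0)
    (hU : U = PowerSeries.X * (1 + U) ^ (s - 1))
    (Usq : PowerSeries ℚ)
    (hUsq : Usq = PowerSeries.mk fun j =>
      if 2 ∣ j then PowerSeries.coeff (j / 2) U else 0) :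
    PowerSeries.coeff k ((1 / 2 : ℚ) • (U ^ 2 - Usq))
      = (1 / (k : ℚ)) * (Nat.choose ((s - 1) * k) (k - 2) : ℚ)
        - (if 2 ∣ k then (1 / (k : ℚ)) * (Nat.choose ((s - 1) * (k / 2)) (k / 2 - 1) : ℚ)
          else 0) :=
  half_Usq_sub_Uxsq_coeff_general s k hk U hU Usq hUsq
end

section
/- For integers s ≥ 3 and k ≥ 2, the coefficient of x^2 in U(x)² computed two ways agree: Σ_{a+b=k, a,b≥1} (1/a)binom(a(s-1),a-1)·(1/b)binom(b(s-1),b-1) = (2/k)·binom(k(s-1), k-2). -/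
/-!
Write `z = s - 1`. The coefficients `(1/a)·C(az, a-1)` are the values at `x = 1` of Rothe's
polynomials `A_a(x) = x/(x+az)·C(x+az, a)`, so `U = F - 1` with `F(t) = Σ_a A_a(1) tᵃ`.
The Rothe–Hagen identity `Σ_{a+b=n} A_a(x) A_b(y) = A_n(x+y)` gives `F² = Σ_n A_n(2) tⁿ`, hence
the coefficient of `tᵏ` in `U² = F² - 2F + 1` is `A_k(2) - 2A_k(1)`, which is `(2/k)·C(kz, k-2)`
by Pascal's rule. For natural `x, y` the Rothe–Hagen identity follows by induction, because
`A` obeys the Pascal-type recurrence `A_{n+1}(x+1) = A_{n+1}(x) + A_n(x+z)`.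
-/

open Finset

theorem sum_antidiagonal_mul_eq_of_recurrence {R : Type*} [CommSemiring R] {f : ℕ → ℕ → R}
    {z : ℕ} (h_zero : ∀ x, f 0 x = 1) (h_succ_zero : ∀ n, f (n + 1) 0 = 0)
    (h_succ_succ : ∀ n x, f (n + 1) (x + 1) = f (n + 1) x + f n (x + z)) (n x y : ℕ) :
    ∑ p ∈ antidiagonal n, f p.1 x * f p.2 y = f n (x + y) := by
  induction n generalizing x with
  | zero => simp [h_zero]
  | succ n ihn =>
    induction x with
    | zero => simp [Nat.sum_antidiagonal_succ, h_zero, h_succ_zero]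
    | succ x ihx =>
      rw [Nat.sum_antidiagonal_succ] at ihx ⊢
      simp only [h_succ_succ, h_zero, add_mul, sum_add_distrib, ihn] at ihx ⊢
      rw [← add_assoc, ihx, add_right_comm x 1 y, h_succ_succ, add_right_comm]

theorem sum_antidiagonal_eq_add_sum_Icc_add {M : Type*} [AddCommMonoid M] (f : ℕ → ℕ → M)
    {k : ℕ} (hk : 0 < k) :
    ∑ p ∈ antidiagonal k, f p.1 p.2 = f 0 k + ∑ a ∈ Icc 1 (k - 1), f a (k - a) + f k 0 := by
  rw [Nat.sum_antidiagonal_eq_sum_range_succ, range_eq_Ico, sum_Ico_succ_top (Nat.zero_le k),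
    sum_eq_sum_Ico_succ_bot hk, ← Ico_add_one_right_eq_Icc, Nat.sub_one_add_one hk.ne']
  simp

/-- Rothe's polynomial `x/(x+nz)·C(x+nz, n)` in the form `x/n·C(x+nz-1, n-1)`, which has no pole
at `x + nz = 0`; the truncated subtraction only matters at `x = 0`, where the factor `x` vanishes. -/
def rothe (z : ℕ) : ℕ → ℕ → ℚ
  | 0, _ => 1
  | n + 1, x => x / (n + 1) * (x + (n + 1) * z - 1).choose n

theorem rothe_zero (z x : ℕ) : rothe z 0 x = 1 := rfl

theorem rothe_succ_zero (z n : ℕ) : rothe z (n + 1) 0 = 0 := by simp [rothe]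

theorem rothe_succ_succ (z n x : ℕ) :
    rothe z (n + 1) (x + 1) = rothe z (n + 1) x + rothe z n (x + z) := by
  cases n with
  | zero => simp [rothe]
  | succ m =>
    obtain hN | ⟨M, hM⟩ : x + (m + 1 + 1) * z = 0 ∨ ∃ M, x + (m + 1 + 1) * z = M + 1 :=
      (em _).imp_right Nat.exists_eq_add_one_of_ne_zero
    · obtain ⟨rfl, rfl⟩ : x = 0 ∧ z = 0 := by simpa using hN
      simp [rothe]
    · have e1 : x + 1 + (m + 1 + 1) * z - 1 = M + 1 := by omega
      have e2 : x + (m + 1 + 1) * z - 1 = M := by omega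
      have e3 : x + z + (m + 1) * z - 1 = M := by
        rw [show x + z + (m + 1) * z = x + (m + 1 + 1) * z by ring]; omega
      simp only [rothe, e1, e2, e3]
      have hMq : (x : ℚ) + (m + 1 + 1) * z = M + 1 := by exact_mod_cast hM
      have pascal : ((M + 1).choose (m + 1) : ℚ) = M.choose m + M.choose (m + 1) := by
        exact_mod_cast Nat.choose_succ_succ' M m
      have absorb : ((M + 1 : ℕ) : ℚ) * M.choose m = (M + 1).choose (m + 1) * (m + 1 : ℕ) := by
        exact_mod_cast Nat.add_one_mul_choose_eq M m
      push_cast at absorb ⊢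
      field_simp
      linear_combination (x * (m + 1) : ℚ) * pascal - absorb - (M.choose m : ℚ) * hMq

theorem sum_antidiagonal_rothe_mul_rothe (z n x y : ℕ) :
    ∑ p ∈ antidiagonal n, rothe z p.1 x * rothe z p.2 y = rothe z n (x + y) :=
  sum_antidiagonal_mul_eq_of_recurrence (rothe_zero z) (rothe_succ_zero z) (rothe_succ_succ z) n x y

theorem sum_Icc_rothe_one_mul_rothe_one (z : ℕ) {k : ℕ} (hk : 0 < k) :
    ∑ a ∈ Icc 1 (k - 1), rothe z a 1 * rothe z (k - a) 1 = rothe z k 2 - 2 * rothe z k 1 := by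
  have h := sum_antidiagonal_rothe_mul_rothe z k 1 1
  rw [sum_antidiagonal_eq_add_sum_Icc_add (fun a b => rothe z a 1 * rothe z b 1) hk] at h
  simp only [rothe_zero, one_mul, mul_one] at h
  linear_combination h

theorem rothe_one_of_pos (z : ℕ) {a : ℕ} (ha : 0 < a) :
    rothe z a 1 = 1 / a * (a * z).choose (a - 1) := by
  obtain ⟨n, rfl⟩ := Nat.exists_eq_add_one_of_ne_zero ha.ne'
  simp [rothe]

theorem rothe_two_sub_two_mul_rothe_one (z : ℕ) {k : ℕ} (hk : 2 ≤ k) :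
    rothe z k 2 - 2 * rothe z k 1 = 2 / k * (k * z).choose (k - 2) := by
  obtain ⟨m, rfl⟩ := Nat.exists_eq_add_of_le' hk
  have hidx : 2 + (m + 1 + 1) * z - 1 = (m + 2) * z + 1 := by
    rw [show 2 + (m + 1 + 1) * z = (m + 2) * z + 1 + 1 by ring]; rfl
  simp only [rothe, hidx, Nat.add_sub_cancel_left, show m + 2 - 2 = m by rfl,
    show m + 1 + 1 = m + 2 by rfl]
  rw [Nat.choose_succ_succ' ((m + 2) * z) m]
  push_cast
  ring

theorem fussCatalan_convolution_general (s k : ℕ) (hk : 2 ≤ k) :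
    ∑ a ∈ Finset.Icc 1 (k - 1),
        ((1 / (a : ℚ)) * (Nat.choose (a * (s - 1)) (a - 1) : ℚ)) *
          ((1 / ((k - a : ℕ) : ℚ)) * (Nat.choose ((k - a) * (s - 1)) (k - a - 1) : ℚ))
      = (2 / (k : ℚ)) * (Nat.choose (k * (s - 1)) (k - 2) : ℚ) := by
  calc _ = ∑ a ∈ Icc 1 (k - 1), rothe (s - 1) a 1 * rothe (s - 1) (k - a) 1 := by
        refine sum_congr rfl fun a ha => ?_
        obtain ⟨ha1, hak⟩ := mem_Icc.mp ha
        rw [rothe_one_of_pos _ ha1, rothe_one_of_pos _ (by omega : 0 < k - a)]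
    _ = rothe (s - 1) k 2 - 2 * rothe (s - 1) k 1 :=
        sum_Icc_rothe_one_mul_rothe_one (s - 1) (by omega)
    _ = 2 / k * (k * (s - 1)).choose (k - 2) := rothe_two_sub_two_mul_rothe_one (s - 1) hk

/-- Convolution identity for Fuss-Catalan numbers: the `x^k`-coefficient of `U(x)²`,
computed as the convolution of coefficients of `U`, equals `(2/k)·binom(k(s-1), k-2)`. -/
theorem fussCatalan_convolution (s k : ℕ) (hs : 3 ≤ s) (hk : 2 ≤ k) :
    ∑ a ∈ Finset.Icc 1 (k - 1),
        ((1 / (a : ℚ)) * (Nat.choose (a * (s - 1)) (a - 1) : ℚ)) *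
          ((1 / ((k - a : ℕ) : ℚ)) * (Nat.choose ((k - a) * (s - 1)) (k - a - 1) : ℚ))
      = (2 / (k : ℚ)) * (Nat.choose (k * (s - 1)) (k - 2) : ℚ) :=
  fussCatalan_convolution_general s k hk
end

section
/- Burnside/Pólya count for rooted clusters: F_s(x) = x·(1/s)·Σ_{d|s} φ(d)·(1 + U_s(x^d))^{s/d}, where U_s(x) = x(1+U_s(x))^{s-1}, has x^k-coefficient (for k ≥ 2) equal to Σ_{d | gcd(s, k-1)} Σ_{t=1}^{min(s/d, (k-1)/d)} [φ(d)·d·t / (s·(k-1))]·binom(s/d, t)·binom((s-1)(k-1)/d, (k-1)/d − t), and x^1-coefficient equal to 1. -/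
open PowerSeries Finset

/-!
Substituting `x ↦ x^d` is the ring homomorphism `PowerSeries.expand d`, so
`[x^n](1 + U(x^d))^{s/d}` vanishes unless `d ∣ n`, and is `[x^{n/d}](1 + U)^{s/d}` otherwise.
Expanding `(1 + U)^e` binomially reduces everything to the coefficients of `U^t`, which by
Lagrange inversion are `[x^j]U^t = (t/j)·C((s-1)j, j-t)`. That formula is proved by strong
induction on `j` from `U^t = x^t(1 + U)^{(s-1)t}`: the inductive step is Vandermonde's convolution
after `r·C(a,r) = a·C(a-1,r-1)`. For `x^1` only `[x^0] = 1` enters, and `∑_{d ∣ s} φ(d) = s`.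
-/

theorem Nat.sum_Icc_mul_choose_mul_choose (a b n : ℕ) (hn : n ≠ 0) :
    ∑ r ∈ Icc 1 n, r * a.choose r * b.choose (n - r) = a * (a + b - 1).choose (n - 1) := by
  obtain ⟨n, rfl⟩ := Nat.exists_eq_add_one_of_ne_zero hn
  rcases a with _ | a
  · rw [zero_mul]
    exact sum_eq_zero fun r hr => by
      rw [Nat.choose_eq_zero_of_lt (mem_Icc.1 hr).1, mul_zero, zero_mul]
  rw [← Ico_add_one_right_eq_Icc, sum_Ico_eq_sum_range, Nat.add_sub_cancel, Nat.add_sub_cancel,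
    Nat.add_right_comm, Nat.add_sub_cancel, Nat.add_choose_eq,
    Nat.sum_antidiagonal_eq_sum_range_succ (fun i j => a.choose i * b.choose j), mul_sum]
  refine sum_congr rfl fun k _ => ?_
  rw [add_comm 1 k, Nat.add_sub_add_right, mul_comm (k + 1), ← Nat.add_one_mul_choose_eq a k]
  ring

theorem Nat.sum_divisors_ite_dvd {M : Type*} [AddCommMonoid M] {s : ℕ} (hs : s ≠ 0) (n : ℕ)
    (f : ℕ → M) :
    ∑ d ∈ s.divisors, (if d ∣ n then f d else 0) = ∑ d ∈ (s.gcd n).divisors, f d := by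
  rw [← sum_filter, ← Nat.divisors_filter_dvd_of_dvd hs (Nat.gcd_dvd_left s n)]
  refine sum_congr (filter_congr fun d hd => ?_) fun _ _ => rfl
  rw [Nat.dvd_gcd_iff, and_iff_right (Nat.dvd_of_mem_divisors hd)]

theorem PowerSeries.coeff_one_add_pow {R : Type*} [CommSemiring R] (f : R⟦X⟧) (e q : ℕ) :
    coeff q ((1 + f) ^ e) = ∑ t ∈ range (e + 1), e.choose t * coeff q (f ^ t) := by
  rw [add_comm, add_pow, map_sum]
  refine sum_congr rfl fun t _ => ?_
  rw [one_pow, mul_one, mul_comm, ← nsmul_eq_mul, map_nsmul, nsmul_eq_mul]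

/-- `[x^j] U^t` for `U = x(1 + U)^m`; the case `t = 0` is separate because `0 / 0 = 0` in `ℚ`. -/
noncomputable def lagrangeCoeff (m j t : ℕ) : ℚ :=
  if t = 0 then if j = 0 then 1 else 0
  else if t ≤ j then t / j * (m * j).choose (j - t) else 0

theorem sum_range_choose_mul_lagrangeCoeff_eq_sum_Icc (m e q : ℕ) (hq : q ≠ 0) :
    ∑ t ∈ range (e + 1), (e.choose t : ℚ) * lagrangeCoeff m q t
      = ∑ t ∈ Icc 1 (min e q), (e.choose t : ℚ) * (t / q * (m * q).choose (q - t)) := by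
  symm
  refine sum_subset_zero_on_sdiff (fun t ht => ?_) (fun t ht => ?_) (fun t ht => ?_)
  · simp only [mem_Icc, mem_range] at ht ⊢
    omega
  · simp only [mem_sdiff, mem_Icc, mem_range] at ht
    rcases Nat.eq_zero_or_pos t with rfl | htpos
    · simp [lagrangeCoeff, hq]
    · simp [lagrangeCoeff, htpos.ne', show ¬t ≤ q by omega]
  · simp only [mem_Icc] at ht
    rw [lagrangeCoeff, if_neg (by omega), if_pos (by omega)]

theorem lagrangeCoeff_eq_sum_range_choose_mul {m t j : ℕ} (hm : 0 < m) (ht : t ≠ 0)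
    (htj : t ≤ j) :
    lagrangeCoeff m j t
      = ∑ r ∈ range (m * t + 1), ((m * t).choose r : ℚ) * lagrangeCoeff m (j - t) r := by
  obtain ⟨n, rfl⟩ := Nat.exists_eq_add_of_le htj
  rw [Nat.add_sub_cancel_left]
  rcases eq_or_ne n 0 with rfl | hn
  · simp [lagrangeCoeff, ht]
  have hchoose : (m * (t + n) : ℚ) * (m * (t + n) - 1).choose (n - 1)
      = (m * (t + n)).choose n * n := by
    have := Nat.add_one_mul_choose_eq (m * (t + n) - 1) (n - 1)
    rw [Nat.sub_add_cancel (Nat.mul_pos hm (by omega)), Nat.sub_add_cancel (by omega)] at this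
    exact_mod_cast this
  calc lagrangeCoeff m (t + n) t
      = (1 / n) * ((m * t : ℕ) * ((m * (t + n) - 1).choose (n - 1) : ℕ)) := by
        rw [lagrangeCoeff, if_neg ht, if_pos (by omega), Nat.add_sub_cancel_left]
        push_cast
        field_simp
        linear_combination -hchoose
    _ = (1 / n) *
          ∑ r ∈ Icc 1 n, ((r * (m * t).choose r * (m * n).choose (n - r) : ℕ) : ℚ) := by
        rw [← Nat.cast_sum, Nat.sum_Icc_mul_choose_mul_choose _ _ _ hn, mul_add]
        push_cast
        ring
    _ = ∑ r ∈ Icc 1 (min (m * t) n),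
          ((m * t).choose r : ℚ) * (r / n * (m * n).choose (n - r)) := by
        rw [mul_sum]
        refine (sum_subset_zero_on_sdiff (fun r hr => ?_) (fun r hr => ?_) (fun r hr => ?_)).symm
        · simp only [mem_Icc] at hr ⊢
          omega
        · simp only [mem_sdiff, mem_Icc] at hr
          rw [Nat.choose_eq_zero_of_lt (by omega : m * t < r)]
          simp
        · push_cast
          ring
    _ = _ := (sum_range_choose_mul_lagrangeCoeff_eq_sum_Icc m (m * t) n hn).symm

section LagrangeInversion

variable {m : ℕ} {U : ℚ⟦X⟧}

theorem coeff_pow_eq_lagrangeCoeff (hm : 0 < m) (hU : U = X * (1 + U) ^ m) (j t : ℕ) :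
    coeff j (U ^ t) = lagrangeCoeff m j t := by
  induction j using Nat.strong_induction_on generalizing t with
  | _ j ih =>
  rcases eq_or_ne t 0 with rfl | ht
  · simp [lagrangeCoeff, coeff_one]
  have hUt : U ^ t = X ^ t * (1 + U) ^ (m * t) := by
    conv_lhs => rw [hU]
    rw [mul_pow, ← pow_mul, mul_comm m]
  rw [hUt, coeff_X_pow_mul']
  split_ifs with htj
  · rw [coeff_one_add_pow, lagrangeCoeff_eq_sum_range_choose_mul hm ht htj]
    exact sum_congr rfl fun r _ => by rw [ih (j - t) (by omega)]
  · simp [lagrangeCoeff, ht, htj]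

theorem coeff_one_add_pow_eq_sum_Icc (hm : 0 < m) (hU : U = X * (1 + U) ^ m) (e : ℕ) {q : ℕ}
    (hq : q ≠ 0) :
    coeff q ((1 + U) ^ e)
      = ∑ t ∈ Icc 1 (min e q), (e.choose t : ℚ) * (t / q * (m * q).choose (q - t)) := by
  simp only [coeff_one_add_pow, coeff_pow_eq_lagrangeCoeff hm hU,
    sum_range_choose_mul_lagrangeCoeff_eq_sum_Icc m e q hq]

theorem constantCoeff_one_add_pow (hU : U = X * (1 + U) ^ m) (e : ℕ) :
    constantCoeff ((1 + U) ^ e) = 1 := by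
  rw [map_pow, map_add, map_one, hU, map_mul, constantCoeff_X, zero_mul, add_zero, one_pow]

end LagrangeInversion

theorem rooted_cluster_generating_function_general (s : ℕ) (hs : 3 ≤ s)
    (U : PowerSeries ℚ)
    (hU : U = PowerSeries.X * (1 + U) ^ (s - 1))
    (Usub : ℕ → PowerSeries ℚ)
    (hUsub : ∀ d : ℕ, Usub d = PowerSeries.mk fun j =>
      if d ∣ j then PowerSeries.coeff (j / d) U else 0)
    (F : PowerSeries ℚ)
    (hF : F = ((1 / s : ℚ)) • (PowerSeries.X *
      ∑ d ∈ s.divisors, (Nat.totient d : ℚ) • (1 + Usub d) ^ (s / d))) :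
    PowerSeries.coeff 1 F = 1 ∧
      ∀ k : ℕ, 2 ≤ k →
        PowerSeries.coeff k F
          = ∑ d ∈ (Nat.gcd s (k - 1)).divisors,
              ∑ t ∈ Finset.Icc 1 (min (s / d) ((k - 1) / d)),
                ((Nat.totient d : ℚ) * (d : ℚ) * (t : ℚ) / ((s : ℚ) * ((k - 1 : ℕ) : ℚ))) *
                  (Nat.choose (s / d) t : ℚ) *
                  (Nat.choose ((s - 1) * ((k - 1) / d)) ((k - 1) / d - t) : ℚ) := by
  have hs0 : s ≠ 0 := by omega
  have hm : 0 < s - 1 := by omega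
  have hcoeff : ∀ n, coeff (n + 1) F = 1 / s * ∑ d ∈ s.divisors,
      if d ∣ n then (d.totient : ℚ) * coeff (n / d) ((1 + U) ^ (s / d)) else 0 := by
    intro n
    rw [hF, coeff_smul, coeff_succ_X_mul, map_sum, smul_eq_mul]
    refine congrArg _ (sum_congr rfl fun d hd => ?_)
    have hd0 : d ≠ 0 := Nat.ne_of_gt (Nat.pos_of_mem_divisors hd)
    have hexpand : (1 + Usub d) ^ (s / d) = expand d hd0 ((1 + U) ^ (s / d)) := by
      rw [map_pow, map_add, map_one]
      congr
      ext j
      rw [hUsub, coeff_mk, coeff_expand]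
    rw [coeff_smul, smul_eq_mul, hexpand, coeff_expand, mul_ite, mul_zero]
  refine ⟨?_, fun k hk => ?_⟩
  · rw [hcoeff 0]
    simp only [dvd_zero, if_true, Nat.zero_div, coeff_zero_eq_constantCoeff,
      constantCoeff_one_add_pow hU, mul_one]
    rw [← Nat.cast_sum, Nat.sum_totient]
    field_simp
  obtain ⟨n, rfl⟩ : ∃ n, k = n + 1 := ⟨k - 1, by omega⟩
  rw [Nat.add_sub_cancel, hcoeff n, Nat.sum_divisors_ite_dvd hs0, mul_sum]
  refine sum_congr rfl fun d hd => ?_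
  have hdn : d ∣ n := (Nat.dvd_of_mem_divisors hd).trans (Nat.gcd_dvd_right s n)
  have hd0 : 0 < d := Nat.pos_of_mem_divisors hd
  have hnd : n / d ≠ 0 := (Nat.div_pos (Nat.le_of_dvd (by omega) hdn) hd0).ne'
  rw [coeff_one_add_pow_eq_sum_Icc hm hU _ hnd, mul_sum, mul_sum]
  refine sum_congr rfl fun t _ => ?_
  rw [Nat.cast_div hdn (by positivity)]
  field_simp

/-- Burnside/Pólya count for clusters rooted at a cell:
`F_s(x) = x·(1/s)·Σ_{d|s} φ(d)·(1 + U_s(x^d))^{s/d}` has `x^1`-coefficient `1` and,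
for `k ≥ 2`, `x^k`-coefficient
`Σ_{d | gcd(s,k-1)} Σ_t [φ(d)d t/(s(k-1))]·binom(s/d, t)·binom((s-1)(k-1)/d, (k-1)/d − t)`.
Here `U` is the unique power series with zero constant term satisfying
`U = X(1+U)^{s-1}`, and `U(x^d)` is the series whose `x^{dj}`-coefficient is the
`x^j`-coefficient of `U`. -/
theorem rooted_cluster_generating_function (s : ℕ) (hs : 3 ≤ s)
    (U : PowerSeries ℚ)
    (hU0 : PowerSeries.constantCoeff U = 0)
    (hU : U = PowerSeries.X * (1 + U) ^ (s - 1))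
    (Usub : ℕ → PowerSeries ℚ)
    (hUsub : ∀ d : ℕ, Usub d = PowerSeries.mk fun j =>
      if d ∣ j then PowerSeries.coeff (j / d) U else 0)
    (F : PowerSeries ℚ)
    (hF : F = ((1 / s : ℚ)) • (PowerSeries.X *
      ∑ d ∈ s.divisors, (Nat.totient d : ℚ) • (1 + Usub d) ^ (s / d))) :
    PowerSeries.coeff 1 F = 1 ∧
      ∀ k : ℕ, 2 ≤ k →
        PowerSeries.coeff k F
          = ∑ d ∈ (Nat.gcd s (k - 1)).divisors,
              ∑ t ∈ Finset.Icc 1 (min (s / d) ((k - 1) / d)),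
                ((Nat.totient d : ℚ) * (d : ℚ) * (t : ℚ) / ((s : ℚ) * ((k - 1 : ℕ) : ℚ))) *
                  (Nat.choose (s / d) t : ℚ) *
                  (Nat.choose ((s - 1) * ((k - 1) / d)) ((k - 1) / d - t) : ℚ) :=
  rooted_cluster_generating_function_general s hs U hU Usub hUsub F hF
end

section
/- In any (m+2)-angulation of an (nm+2)-gon, at most one m-diagonal divides the polygon into two parts containing equal numbers of m-diagonals of the angulation. -/
open Finset

section ChordsInside

variable {ι : Type*} [LinearOrder ι]

def chordsInside (Δ : Finset (ι × ι)) (α : ι × ι) : Finset (ι × ι) :=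
  (Δ.erase α).filter (fun γ => α.1 ≤ γ.1 ∧ γ.2 ≤ α.2)

theorem mem_chordsInside {Δ : Finset (ι × ι)} {α γ : ι × ι} :
    γ ∈ chordsInside Δ α ↔ γ ≠ α ∧ γ ∈ Δ ∧ α.1 ≤ γ.1 ∧ γ.2 ≤ α.2 := by
  simp only [chordsInside, mem_filter, mem_erase, and_assoc]

theorem card_chordsInside_lt_of_nested {Δ : Finset (ι × ι)} {α β : ι × ι} (hβ : β ∈ Δ)
    (hne : α ≠ β) (h₁ : α.1 ≤ β.1) (h₂ : β.2 ≤ α.2) :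
    #(chordsInside Δ β) < #(chordsInside Δ α) := by
  refine card_lt_card (ssubset_iff.mpr ⟨β, fun h => (mem_chordsInside.mp h).1 rfl, ?_⟩)
  intro γ hγ
  rcases mem_insert.mp hγ with rfl | hγ
  · exact mem_chordsInside.mpr ⟨hne.symm, hβ, h₁, h₂⟩
  · obtain ⟨hγβ, hγΔ, hγ₁, hγ₂⟩ := mem_chordsInside.mp hγ
    refine mem_chordsInside.mpr ⟨?_, hγΔ, h₁.trans hγ₁, hγ₂.trans h₂⟩
    rintro rfl
    exact hne (Prod.ext (le_antisymm h₁ hγ₁) (le_antisymm hγ₂ h₂))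

theorem card_chordsInside_add_card_chordsInside_add_two_le {Δ : Finset (ι × ι)}
    {α β : ι × ι} (hα : α ∈ Δ) (hβ : β ∈ Δ) (hne : α ≠ β) (hlt : ∀ γ ∈ Δ, γ.1 < γ.2)
    (hsep : α.2 ≤ β.1) :
    #(chordsInside Δ α) + #(chordsInside Δ β) + 2 ≤ #Δ := by
  have hdisj : Disjoint (chordsInside Δ α) (chordsInside Δ β) := by
    refine disjoint_left.mpr fun γ hγα hγβ => ?_
    obtain ⟨-, hγΔ, -, hγ₂⟩ := mem_chordsInside.mp hγα
    obtain ⟨-, -, hγ₁, -⟩ := mem_chordsInside.mp hγβ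
    exact (hlt γ hγΔ).not_ge (hγ₂.trans (hsep.trans hγ₁))
  have hsub : chordsInside Δ α ∪ chordsInside Δ β ⊆ (Δ.erase α).erase β := by
    intro γ hγ
    simp only [mem_erase]
    rcases mem_union.mp hγ with hγ | hγ
    · obtain ⟨hγα, hγΔ, -, hγ₂⟩ := mem_chordsInside.mp hγ
      refine ⟨?_, hγα, hγΔ⟩
      rintro rfl
      exact (hlt γ hβ).not_ge (hγ₂.trans hsep)
    · obtain ⟨hγβ, hγΔ, hγ₁, -⟩ := mem_chordsInside.mp hγ
      refine ⟨hγβ, ?_, hγΔ⟩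
      rintro rfl
      exact (hlt γ hα).not_ge (hsep.trans hγ₁)
  have hcard := card_le_card hsub
  rw [card_union_of_disjoint hdisj, card_erase_of_mem (mem_erase.mpr ⟨hne.symm, hβ⟩),
    card_erase_of_mem hα] at hcard
  have : 2 ≤ #Δ := one_lt_card.mpr ⟨α, hα, β, hβ, hne⟩
  omega

end ChordsInside

theorem nested_or_separated_of_not_crosses {a b : ℕ × ℕ} (h : ¬Crosses a b) :
    (a.1 ≤ b.1 ∧ b.2 ≤ a.2) ∨ (b.1 ≤ a.1 ∧ a.2 ≤ b.2) ∨ a.2 ≤ b.1 ∨ b.2 ≤ a.1 := by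
  unfold Crosses at h
  omega

theorem at_most_one_equal_split_general (n m : ℕ)
    (Δ : Finset (ℕ × ℕ)) (hΔ : IsAngulation n m Δ)
    (α β : ℕ × ℕ) (hα : α ∈ Δ) (hβ : β ∈ Δ)
    (hαsplit : 2 * ((Δ.erase α).filter (fun γ => α.1 ≤ γ.1 ∧ γ.2 ≤ α.2)).card
        = Δ.card - 1)
    (hβsplit : 2 * ((Δ.erase β).filter (fun γ => β.1 ≤ γ.1 ∧ γ.2 ≤ β.2)).card
        = Δ.card - 1) :
    α = β := by
  obtain ⟨hdiag, hnc, -⟩ := hΔ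
  have hlt : ∀ γ ∈ Δ, γ.1 < γ.2 := fun γ hγ => (hdiag γ hγ).2.1
  have hα' : 2 * #(chordsInside Δ α) = #Δ - 1 := hαsplit
  have hβ' : 2 * #(chordsInside Δ β) = #Δ - 1 := hβsplit
  by_contra hne
  rcases nested_or_separated_of_not_crosses (hnc α hα β hβ) with h | h | h | h
  · have := card_chordsInside_lt_of_nested hβ hne h.1 h.2
    omega
  · have := card_chordsInside_lt_of_nested hα (Ne.symm hne) h.1 h.2
    omega
  · have := card_chordsInside_add_card_chordsInside_add_two_le hα hβ hne hlt h
    omega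
  · have := card_chordsInside_add_card_chordsInside_add_two_le hβ hα (Ne.symm hne) hlt h
    omega

/-- In any `(m+2)`-angulation of an `(nm+2)`-gon, at most one m-diagonal divides the
polygon into two parts containing equally many of the remaining diagonals. -/
theorem at_most_one_equal_split (n m : ℕ) (hn : 2 ≤ n) (hm : 1 ≤ m)
    (Δ : Finset (ℕ × ℕ)) (hΔ : IsAngulation n m Δ)
    (α β : ℕ × ℕ) (hα : α ∈ Δ) (hβ : β ∈ Δ)
    (hαsplit : 2 * ((Δ.erase α).filter (fun γ => α.1 ≤ γ.1 ∧ γ.2 ≤ α.2)).card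
        = Δ.card - 1)
    (hβsplit : 2 * ((Δ.erase β).filter (fun γ => β.1 ≤ γ.1 ∧ γ.2 ≤ β.2)).card
        = Δ.card - 1) :
    α = β :=
  at_most_one_equal_split_general n m Δ hΔ α β hα hβ hαsplit hβsplit
end
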